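/- The set 𝓗 = {f ∈ Homeo⁺([0,1]) : for every x₀ ∈ fix(f) ∩ (0,1), the function x ↦ f(x) − x does not have a local extremum at x₀} is co-Haar null in Homeo⁺([0,1]). -/

import Mathlib

open MeasureTheory unitInterval Set

noncomputable section

/-- A subset of a group with a measurable structure is *Haar null* (Christensen) if it is
contained in a Borel (here: measurable) set `B` admitting a Borel probability measure `μ`
all of whose two-sided translates `g • B • h` are `μ`-null. -/
def IsHaarNull {G : Type*} [Group G] [MeasurableSpace G] (A : Set G) : Prop :=
  ∃ B : Set G, A ⊆ B ∧ MeasurableSet B ∧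
    ∃ μ : Measure G, IsProbabilityMeasure μ ∧ ∀ g h : G, μ ((fun b => g * b * h) '' B) = 0

/-- The group of self-homeomorphisms of a space, with `(f * g) x = f (g x)`. -/
instance Homeomorph.instGroupSelf {X : Type*} [TopologicalSpace X] : Group (X ≃ₜ X) where
  mul f g := g.trans f
  one := Homeomorph.refl X
  inv := Homeomorph.symm
  mul_assoc _ _ _ := Homeomorph.ext fun _ => rfl
  one_mul _ := Homeomorph.ext fun _ => rfl
  mul_one _ := Homeomorph.ext fun _ => rfl
  inv_mul_cancel f := Homeomorph.ext fun x => f.symm_apply_apply x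

/-- The topology of uniform convergence (= compact-open topology, as the underlying space is
compact) on the self-homeomorphism group. -/
instance Homeomorph.instTopologicalSpaceSelf {X : Type*} [TopologicalSpace X] :
    TopologicalSpace (X ≃ₜ X) :=
  TopologicalSpace.induced (fun f => (⟨⇑f, f.continuous⟩ : C(X, X))) inferInstance

/-- The Polish group `Homeo⁺([0,1])` of increasing homeomorphisms of `[0,1]`. -/
def HomeoPlusI : Subgroup (I ≃ₜ I) where
  carrier := {f | Monotone ⇑f}
  one_mem' := fun _ _ h => h
  mul_mem' := fun hf hg => hf.comp hg
  inv_mem' := by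
    intro f hf a b hab
    show f.symm a ≤ f.symm b
    by_contra hcon
    push_neg at hcon
    have h1 : f (f.symm b) ≤ f (f.symm a) := hf hcon.le
    rw [f.apply_symm_apply, f.apply_symm_apply] at h1
    have : a = b := le_antisymm hab h1
    subst this
    exact lt_irrefl _ hcon

instance : MeasurableSpace HomeoPlusI := borel _
instance : BorelSpace HomeoPlusI := ⟨rfl⟩

/-- The set of fixed points of `f ∈ Homeo⁺([0,1])`. -/
def fixSet (f : HomeoPlusI) : Set I := {x | (f : I ≃ₜ I) x = x}

/-!
A homeomorphism outside the set has a fixed point `x₀ ∈ (0,1)` at which `f - id` has a local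
extremum, so on some interval `K ∋ x₀` with rational endpoints inside `(0,1)` the graph of `f`
stays on one side of the diagonal and touches it. These countably many closed conditions form
the Borel set `badSet`. The test measure is Lebesgue measure pushed forward along `t ↦ F_t`,
`F_t x = x + t x (1 - x)`, a family that increases strictly in `t` at every interior point, and
so do its two-sided translates `t ↦ g F_t h`. Two members `g F_s h < g F_t h` cannot both lie
below the diagonal on `K` and touch it there: at a touching point `x` of the smaller one,
`x = g F_s h x < g F_t h x ≤ x`. Hence each translate of `badSet` meets the family in countably
many parameters.
-/

open Topology

namespace HomeoPlusI

theorem strictMono (f : HomeoPlusI) : StrictMono (f : I ≃ₜ I) :=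
  (f.2 : Monotone _).strictMono_of_injective (f : I ≃ₜ I).injective

def toOrderIso (f : HomeoPlusI) : I ≃o I :=
  (strictMono f).orderIsoOfSurjective _ (f : I ≃ₜ I).surjective

def ofOrderIso (e : I ≃o I) : HomeoPlusI := ⟨e.toHomeomorph, e.monotone⟩

theorem mapsTo_Ioo (f : HomeoPlusI) : MapsTo (f : I ≃ₜ I) (Ioo 0 1) (Ioo 0 1) := by
  intro x hx
  have h0 : toOrderIso f 0 = 0 := (toOrderIso f).map_bot
  have h1 : toOrderIso f 1 = 1 := (toOrderIso f).map_top
  exact ⟨h0 ▸ strictMono f hx.1, h1 ▸ strictMono f hx.2⟩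

theorem continuous_toContinuousMap :
    Continuous fun f : HomeoPlusI => (⟨(f : I ≃ₜ I), (f : I ≃ₜ I).continuous⟩ : C(I, I)) :=
  have : Continuous fun f : I ≃ₜ I => (⟨f, f.continuous⟩ : C(I, I)) := continuous_induced_dom
  this.comp continuous_subtype_val

theorem continuous_eval : Continuous fun p : HomeoPlusI × I => (p.1 : I ≃ₜ I) p.2 :=
  ContinuousEval.continuous_eval.comp
    ((continuous_toContinuousMap.comp continuous_fst).prodMk continuous_snd)

theorem continuous_apply (x : I) : Continuous fun f : HomeoPlusI => (f : I ≃ₜ I) x :=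
  continuous_eval.comp (Continuous.prodMk_left x)

theorem continuous_of_continuous_uncurry {X : Type*} [TopologicalSpace X] (F : X → HomeoPlusI)
    (hF : Continuous fun p : X × I => (F p.1 : I ≃ₜ I) p.2) : Continuous F :=
  (continuous_induced_rng.2 (ContinuousMap.continuous_of_continuous_uncurry _ hF)).subtype_mk _

theorem continuous_mul_mul (g h : HomeoPlusI) : Continuous fun f => g * f * h :=
  continuous_of_continuous_uncurry _ <| (g : I ≃ₜ I).continuous.comp <| continuous_eval.comp <|
    continuous_fst.prodMk ((h : I ≃ₜ I).continuous.comp continuous_snd)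

end HomeoPlusI

def bump (t x : I) : I :=
  ⟨x + t * x * (1 - x), by
    have ht := t.2; have hx := x.2
    constructor
    · linarith [mul_nonneg (mul_nonneg ht.1 hx.1) (sub_nonneg.2 hx.2), hx.1]
    · nlinarith [mul_nonneg (sub_nonneg.2 hx.2) (sub_nonneg.2 (mul_le_one₀ ht.2 hx.1 hx.2))]⟩

theorem coe_bump (t x : I) : (bump t x : ℝ) = x + t * x * (1 - x) := rfl

theorem bump_strictMono (t : I) : StrictMono (bump t) := by
  intro x y hxy
  have hxy' : (x : ℝ) < y := hxy
  have ht := t.2; have hx := x.2; have hy := y.2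
  have hslope : (0 : ℝ) < 1 + t * (1 - x - y) := by
    rcases le_total ((x : ℝ) + y) 1 with h | h
    · nlinarith [mul_nonneg ht.1 (sub_nonneg.2 h)]
    · nlinarith [mul_nonneg (sub_nonneg.2 ht.2) (sub_nonneg.2 h), hy.2]
  show (bump t x : ℝ) < bump t y
  rw [coe_bump, coe_bump]
  nlinarith [mul_pos (sub_pos.2 hxy') hslope]

theorem continuous_bump : Continuous fun p : I × I => bump p.1 p.2 := by
  unfold bump; fun_prop

theorem bump_surjective (t : I) : Function.Surjective (bump t) := by
  have h0 : bump t 0 = 0 := Subtype.ext (by simp [coe_bump])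
  have h1 : bump t 1 = 1 := Subtype.ext (by simp [coe_bump])
  have hc : Continuous (bump t) := continuous_bump.comp (Continuous.prodMk_right t)
  have hIVT := intermediate_value_univ 0 1 hc
  rw [h0, h1] at hIVT
  exact fun y => hIVT ⟨nonneg', le_one'⟩

theorem bump_lt_bump {s t : I} (hst : s < t) {x : I} (hx : x ∈ Ioo 0 1) : bump s x < bump t x := by
  have hx0 : (0 : ℝ) < x := hx.1
  have hx1 : (x : ℝ) < 1 := hx.2
  have hst' : (s : ℝ) < t := hst
  show (bump s x : ℝ) < bump t x
  rw [coe_bump, coe_bump]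
  have := mul_pos hx0 (sub_pos.2 hx1)
  nlinarith

def bumpFamily (t : I) : HomeoPlusI :=
  HomeoPlusI.ofOrderIso ((bump_strictMono t).orderIsoOfSurjective _ (bump_surjective t))

theorem continuous_bumpFamily : Continuous bumpFamily :=
  HomeoPlusI.continuous_of_continuous_uncurry _ continuous_bump

def touchBelow (K : Set I) : Set HomeoPlusI :=
  {f | ∀ x ∈ K, (f : I ≃ₜ I) x ≤ x} ∩ {f | (K ∩ fixSet f).Nonempty}

def touchAbove (K : Set I) : Set HomeoPlusI :=
  {f | ∀ x ∈ K, x ≤ (f : I ≃ₜ I) x} ∩ {f | (K ∩ fixSet f).Nonempty}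

theorem isClosed_setOf_inter_fixSet_nonempty {K : Set I} (hK : IsClosed K) :
    IsClosed {f : HomeoPlusI | (K ∩ fixSet f).Nonempty} := by
  have : {f : HomeoPlusI | (K ∩ fixSet f).Nonempty} =
      Prod.fst '' {p : HomeoPlusI × I | p.2 ∈ K ∧ (p.1 : I ≃ₜ I) p.2 = p.2} := by
    ext f; simp [Set.Nonempty, fixSet]
  rw [this]
  exact isClosedMap_fst_of_compactSpace _
    ((hK.preimage continuous_snd).inter (isClosed_eq HomeoPlusI.continuous_eval continuous_snd))

theorem isClosed_touchBelow {K : Set I} (hK : IsClosed K) : IsClosed (touchBelow K) := by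
  refine IsClosed.inter ?_ (isClosed_setOf_inter_fixSet_nonempty hK)
  simp only [ofPred_forall]
  exact isClosed_iInter fun x => isClosed_iInter fun _ =>
    isClosed_le (HomeoPlusI.continuous_apply x) continuous_const

theorem isClosed_touchAbove {K : Set I} (hK : IsClosed K) : IsClosed (touchAbove K) := by
  refine IsClosed.inter ?_ (isClosed_setOf_inter_fixSet_nonempty hK)
  simp only [ofPred_forall]
  exact isClosed_iInter fun x => isClosed_iInter fun _ =>
    isClosed_le continuous_const (HomeoPlusI.continuous_apply x)

theorem notMem_touchBelow_of_lt {K : Set I} (hK : K ⊆ Ioo 0 1) {f₁ f₂ : HomeoPlusI}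
    (hlt : ∀ x ∈ Ioo 0 1, (f₁ : I ≃ₜ I) x < (f₂ : I ≃ₜ I) x) (h₁ : f₁ ∈ touchBelow K) :
    f₂ ∉ touchBelow K := by
  rintro ⟨hle, -⟩
  obtain ⟨x, hxK, hfix⟩ := h₁.2
  exact (hlt x (hK hxK)).not_ge ((hle x hxK).trans_eq hfix.symm)

theorem notMem_touchAbove_of_lt {K : Set I} (hK : K ⊆ Ioo 0 1) {f₁ f₂ : HomeoPlusI}
    (hlt : ∀ x ∈ Ioo 0 1, (f₁ : I ≃ₜ I) x < (f₂ : I ≃ₜ I) x) (h₂ : f₂ ∈ touchAbove K) :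
    f₁ ∉ touchAbove K := by
  rintro ⟨hge, -⟩
  obtain ⟨x, hxK, hfix⟩ := h₂.2
  exact (hlt x (hK hxK)).not_ge (hfix.trans_le (hge x hxK))

theorem subsingleton_preimage_touchBelow {α : Type*} [LinearOrder α] {F : α → HomeoPlusI}
    (hF : ∀ s t, s < t → ∀ x ∈ Ioo 0 1, (F s : I ≃ₜ I) x < (F t : I ≃ₜ I) x)
    {K : Set I} (hK : K ⊆ Ioo 0 1) : (F ⁻¹' touchBelow K).Subsingleton := fun s hs t ht =>
  le_antisymm (not_lt.1 fun hts => notMem_touchBelow_of_lt hK (hF t s hts) ht hs)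
    (not_lt.1 fun hst => notMem_touchBelow_of_lt hK (hF s t hst) hs ht)

theorem subsingleton_preimage_touchAbove {α : Type*} [LinearOrder α] {F : α → HomeoPlusI}
    (hF : ∀ s t, s < t → ∀ x ∈ Ioo 0 1, (F s : I ≃ₜ I) x < (F t : I ≃ₜ I) x)
    {K : Set I} (hK : K ⊆ Ioo 0 1) : (F ⁻¹' touchAbove K).Subsingleton := fun s hs t ht =>
  le_antisymm (not_lt.1 fun hts => notMem_touchAbove_of_lt hK (hF t s hts) hs ht)
    (not_lt.1 fun hst => notMem_touchAbove_of_lt hK (hF s t hst) ht hs)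

theorem mul_bumpFamily_mul_lt (g h : HomeoPlusI) (s t : I) (hst : s < t) :
    ∀ x ∈ Ioo 0 1, (g * bumpFamily s * h : I ≃ₜ I) x < (g * bumpFamily t * h : I ≃ₜ I) x :=
  fun _ hx => HomeoPlusI.strictMono g (bump_lt_bump hst (HomeoPlusI.mapsTo_Ioo h hx))

def ratIcc (p q : ℚ) : Set I := Subtype.val ⁻¹' Icc (p : ℝ) q

def badSet : Set HomeoPlusI :=
  ⋃ (p : ℚ) (q : ℚ) (_ : Icc (p : ℝ) q ⊆ Ioo 0 1),
    touchBelow (ratIcc p q) ∪ touchAbove (ratIcc p q)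

theorem measurableSet_badSet : MeasurableSet badSet := by
  have hK (p q : ℚ) : IsClosed (ratIcc p q) := isClosed_Icc.preimage continuous_subtype_val
  exact .iUnion fun p => .iUnion fun q => .iUnion fun _ =>
    (isClosed_touchBelow (hK p q)).measurableSet.union (isClosed_touchAbove (hK p q)).measurableSet

theorem countable_preimage_badSet (g h : HomeoPlusI) :
    ((fun t => g * bumpFamily t * h) ⁻¹' badSet).Countable := by
  simp only [badSet, preimage_iUnion, preimage_union]
  refine countable_iUnion fun p => countable_iUnion fun q => countable_iUnion fun hpq => ?_
  have hK : ratIcc p q ⊆ Ioo 0 1 := fun x hx => hpq hx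
  exact (subsingleton_preimage_touchBelow (mul_bumpFamily_mul_lt g h) hK).countable.union
    (subsingleton_preimage_touchAbove (mul_bumpFamily_mul_lt g h) hK).countable

theorem exists_rat_Icc_subset {a : ℝ} {U : Set ℝ} (hU : U ∈ 𝓝 a) :
    ∃ p q : ℚ, a ∈ Icc (p : ℝ) q ∧ Icc (p : ℝ) q ⊆ U := by
  obtain ⟨l, u, ⟨hl, hu⟩, hsub⟩ := (mem_nhds_iff_exists_Ioo_subset).1 hU
  obtain ⟨p, hlp, hpa⟩ := exists_rat_btwn hl
  obtain ⟨q, haq, hqu⟩ := exists_rat_btwn hu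
  exact ⟨p, q, ⟨hpa.le, haq.le⟩, (Icc_subset_Ioo hlp hqu).trans hsub⟩

theorem exists_ratIcc_of_eventually {x₀ : I} (hx₀ : (x₀ : ℝ) ∈ Ioo 0 1) {P : I → Prop}
    (hP : ∀ᶠ y in 𝓝 x₀, P y) :
    ∃ p q : ℚ, Icc (p : ℝ) q ⊆ Ioo 0 1 ∧ x₀ ∈ ratIcc p q ∧ ∀ y ∈ ratIcc p q, P y := by
  obtain ⟨U, hU, hUP⟩ := (mem_nhds_subtype _ _ _).1 hP
  obtain ⟨p, q, hx₀pq, hpq⟩ :=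
    exists_rat_Icc_subset (Filter.inter_mem hU (Ioo_mem_nhds hx₀.1 hx₀.2))
  exact ⟨p, q, hpq.trans inter_subset_right, hx₀pq, fun y hy => hUP (hpq hy).1⟩

theorem compl_subset_badSet :
    {f : HomeoPlusI | ∀ x₀ : I, x₀ ∈ fixSet f → (x₀ : ℝ) ∈ Set.Ioo (0 : ℝ) 1 →
      ¬ IsLocalExtr (fun x : I => ((f : I ≃ₜ I) x : ℝ) - (x : ℝ)) x₀}ᶜ ⊆ badSet := by
  intro f hf
  simp only [mem_compl_iff, mem_ofPred_eq, not_forall, not_not] at hf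
  obtain ⟨x₀, hfix, hx₀, hextr⟩ := hf
  have hfix' : ((f : I ≃ₜ I) x₀ : ℝ) - x₀ = 0 := sub_eq_zero.2 (congrArg _ hfix)
  simp only [badSet, mem_iUnion]
  rcases hextr with hmin | hmax
  · obtain ⟨p, q, hpq, hx₀K, hK⟩ := exists_ratIcc_of_eventually hx₀ hmin
    refine ⟨p, q, hpq, Or.inr ⟨fun y hy => ?_, x₀, hx₀K, hfix⟩⟩
    have := hK y hy
    simp only [hfix'] at this
    exact Subtype.coe_le_coe.1 (sub_nonneg.1 this)
  · obtain ⟨p, q, hpq, hx₀K, hK⟩ := exists_ratIcc_of_eventually hx₀ hmax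
    refine ⟨p, q, hpq, Or.inl ⟨fun y hy => ?_, x₀, hx₀K, hfix⟩⟩
    have := hK y hy
    simp only [hfix'] at this
    exact Subtype.coe_le_coe.1 (sub_nonpos.1 this)

/-- The set of `f ∈ Homeo⁺([0,1])` such that `x ↦ f x - x` has no local extremum at any fixed
point of `f` lying in `(0,1)` is co-Haar null. -/
theorem stmt_3 :
    IsHaarNull
      ({f : HomeoPlusI |
        ∀ x₀ : I, x₀ ∈ fixSet f → (x₀ : ℝ) ∈ Set.Ioo (0 : ℝ) 1 →
          ¬ IsLocalExtr (fun x : I => ((f : I ≃ₜ I) x : ℝ) - (x : ℝ)) x₀}ᶜ) := by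
  refine ⟨badSet, compl_subset_badSet, measurableSet_badSet, volume.map bumpFamily,
    Measure.isProbabilityMeasure_map continuous_bumpFamily.aemeasurable, fun g h => ?_⟩
  have htrans : (fun b => g * b * h) '' badSet = (fun b => g⁻¹ * b * h⁻¹) ⁻¹' badSet :=
    congrFun (image_eq_preimage_of_inverse (f := fun b => g * b * h)
      (g := fun b => g⁻¹ * b * h⁻¹) (fun b => by group) (fun b => by group)) badSet
  rw [htrans, Measure.map_apply continuous_bumpFamily.measurable
    ((HomeoPlusI.continuous_mul_mul _ _).measurable measurableSet_badSet)]
  exact (countable_preimage_badSet g⁻¹ h⁻¹).measure_zero _
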